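/- Every odd C-configuration is a minimal uncolorable degree-feasible configuration. That is, if G = tC_n with n ≥ 5 odd and t ≥ 1, and (X,H) is a cover of G such that each X_v has a partition (X_v^1, X_v^2) where for each i ∈ {1,2} and each pair {u,v} of adjacent vertices of G, H[X_u^i ∪ X_v^i] is a complete bipartite graph K_{t,t} with parts X_u^i and X_v^i, and H is the union of all these graphs, then (X,H) has no independent transversal but (X, H−e) has an independent transversal for every edge e of H. -/

import Mathlib

open Finset

noncomputable section
open scoped Classical

structure DPHypergraph (α : Type) where
  verts : Finset α
  edges : Finset ℕ
  inc : ℕ → Finset α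
  inc_sub : ∀ e ∈ edges, inc e ⊆ verts
  inc_card : ∀ e ∈ edges, 2 ≤ (inc e).card

variable {α β : Type} [DecidableEq α] [DecidableEq β]

namespace DPHypergraph

def degree (G : DPHypergraph α) (v : α) : ℕ :=
  (G.edges.filter (fun e => v ∈ G.inc e)).card

def maxDegree (G : DPHypergraph α) : ℕ := G.verts.sup G.degree

def mult (G : DPHypergraph α) (u v : α) : ℕ :=
  (G.edges.filter (fun e => G.inc e = {u, v})).card

def Adj (G : DPHypergraph α) (u v : α) : Prop :=
  u ≠ v ∧ ∃ e ∈ G.edges, u ∈ G.inc e ∧ v ∈ G.inc e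

def Connected (G : DPHypergraph α) : Prop :=
  ∀ u ∈ G.verts, ∀ v ∈ G.verts, Relation.ReflTransGen G.Adj u v

def IndepSet (H : DPHypergraph β) (S : Finset β) : Prop :=
  ∀ e ∈ H.edges, ¬ H.inc e ⊆ S

def eraseEdge (H : DPHypergraph β) (e₀ : ℕ) : DPHypergraph β where
  verts := H.verts
  edges := H.edges.erase e₀
  inc := H.inc
  inc_sub := fun e he => H.inc_sub e (Finset.mem_of_mem_erase he)
  inc_card := fun e he => H.inc_card e (Finset.mem_of_mem_erase he)

def induce (G : DPHypergraph α) (S : Finset α) : DPHypergraph α where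
  verts := S
  edges := G.edges.filter (fun e => G.inc e ⊆ S)
  inc := G.inc
  inc_sub := fun e he => (Finset.mem_filter.mp he).2
  inc_card := fun e he => G.inc_card e (Finset.mem_filter.mp he).1

def IsSub (G' G : DPHypergraph α) : Prop :=
  G'.verts ⊆ G.verts ∧ G'.edges ⊆ G.edges ∧ ∀ e ∈ G'.edges, G'.inc e = G.inc e

def shrink (G : DPHypergraph α) (v : α) : DPHypergraph α where
  verts := G.verts.erase v
  edges := G.edges.filter (fun e => 2 ≤ ((G.inc e).erase v).card)
  inc := fun e => (G.inc e).erase v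
  inc_sub := by
    intro e he y hy
    rw [Finset.mem_erase] at hy ⊢
    exact ⟨hy.1, G.inc_sub e (Finset.mem_filter.mp he).1 hy.2⟩
  inc_card := fun e he => (Finset.mem_filter.mp he).2

def nbhd (H : DPHypergraph β) (x : β) : Finset β :=
  H.verts.filter (fun y => ∃ e ∈ H.edges, H.inc e = {x, y})

def numComponents (G : DPHypergraph α) : ℕ :=
  (G.verts.image (fun v => G.verts.filter (fun u => Relation.ReflTransGen G.Adj v u))).card

def IsBridge (G : DPHypergraph α) (e : ℕ) : Prop :=
  numComponents (G.eraseEdge e) = numComponents G + ((G.inc e).card - 1)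

def IsSepVertex (G : DPHypergraph α) (v : α) : Prop :=
  ∃ A B : Finset α, A ∪ B = G.verts ∧ A ∩ B = {v} ∧ 2 ≤ A.card ∧ 2 ≤ B.card ∧
    ∀ e ∈ G.edges, G.inc e ⊆ A ∨ G.inc e ⊆ B

def IsBlock (G : DPHypergraph α) (S : Finset α) : Prop :=
  S ⊆ G.verts ∧ (G.induce S).Connected ∧ (∀ v, ¬ IsSepVertex (G.induce S) v) ∧
    ∀ S' : Finset α, S ⊆ S' → S' ⊆ G.verts → (G.induce S').Connected →
      (∀ v, ¬ IsSepVertex (G.induce S') v) → S' = S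

end DPHypergraph

open DPHypergraph

def IsCover (G : DPHypergraph α) (X : α → Finset β) (H : DPHypergraph β) : Prop :=
  (∀ u ∈ G.verts, ∀ v ∈ G.verts, u ≠ v → Disjoint (X u) (X v)) ∧
  H.verts = G.verts.biUnion X ∧
  (∀ v ∈ G.verts, H.IndepSet (X v)) ∧
  ∃ M : ℕ → Finset ℕ,
    (∀ e ∈ G.edges,
      M e ⊆ H.edges ∧
      (∀ e' ∈ M e, (∀ v ∈ G.inc e, (H.inc e' ∩ X v).card = 1) ∧
        H.inc e' ⊆ (G.inc e).biUnion X) ∧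
      ∀ e₁ ∈ M e, ∀ e₂ ∈ M e, e₁ ≠ e₂ → Disjoint (H.inc e₁) (H.inc e₂)) ∧
    H.edges = G.edges.biUnion M

def HasIT (H : DPHypergraph β) (Vs : Finset α) (X : α → Finset β) : Prop :=
  ∃ T : Finset β, H.IndepSet T ∧ ∀ v ∈ Vs, (T ∩ X v).card = 1

def MinUncol (H : DPHypergraph β) (Vs : Finset α) (X : α → Finset β) : Prop :=
  ¬ HasIT H Vs X ∧ ∀ e ∈ H.edges, HasIT (H.eraseEdge e) Vs X

def DPColorableAt (G : DPHypergraph α) (k : ℕ) : Prop :=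
  ∀ (X : α → Finset ℕ) (H : DPHypergraph ℕ),
    IsCover G X H → (∀ v ∈ G.verts, k ≤ (X v).card) → HasIT H G.verts X

def chiDP (G : DPHypergraph α) : ℕ := sInf {k | DPColorableAt G k}

def DPDegreeColorable (G : DPHypergraph α) : Prop :=
  ∀ (X : α → Finset ℕ) (H : DPHypergraph ℕ),
    IsCover G X H → (∀ v ∈ G.verts, G.degree v ≤ (X v).card) → HasIT H G.verts X

def colNum (G : DPHypergraph α) : ℕ :=
  sInf {k | ∀ G' : DPHypergraph α, G'.IsSub G → G'.verts.Nonempty →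
    ∃ v ∈ G'.verts, G'.degree v ≤ k}

def ProperColoring (G : DPHypergraph α) (φ : α → ℕ) : Prop :=
  ∀ e ∈ G.edges, ∃ u ∈ G.inc e, ∃ v ∈ G.inc e, φ u ≠ φ v

def LColorable (G : DPHypergraph α) (L : α → Finset ℕ) : Prop :=
  ∃ φ : α → ℕ, ProperColoring G φ ∧ ∀ v ∈ G.verts, φ v ∈ L v

def chiList (G : DPHypergraph α) : ℕ :=
  sInf {k | ∀ L : α → Finset ℕ, (∀ v ∈ G.verts, k ≤ (L v).card) → LColorable G L}

def IsTKn (B : DPHypergraph α) (t n : ℕ) : Prop :=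
  1 ≤ n ∧ B.verts.card = n ∧ (∀ e ∈ B.edges, (B.inc e).card = 2) ∧
  ∀ u ∈ B.verts, ∀ v ∈ B.verts, u ≠ v → B.mult u v = t

def IsTCn (B : DPHypergraph α) (t n : ℕ) : Prop :=
  3 ≤ n ∧ B.verts.card = n ∧ (∀ e ∈ B.edges, (B.inc e).card = 2) ∧
  ∃ f : ℕ → α,
    B.verts = (Finset.range n).image f ∧
    (∀ i < n, ∀ j < n, i ≠ j → f i ≠ f j) ∧
    ∀ i < n, ∀ j < n, i ≠ j →
      B.mult (f i) (f j) = if j = (i + 1) % n ∨ i = (j + 1) % n then t else 0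

def IsDPHyperbrick (B : DPHypergraph α) : Prop :=
  (∃ t n, 1 ≤ t ∧ 1 ≤ n ∧ IsTKn B t n) ∨
  (∃ t n, 1 ≤ t ∧ 3 ≤ n ∧ IsTCn B t n) ∨
  (∃ e ∈ B.edges, B.verts = B.inc e ∧ B.edges = {e})

def AdjPair (G : DPHypergraph α) (u v : α) : Prop :=
  u ≠ v ∧ ∃ e ∈ G.edges, G.inc e = {u, v}

def IsKConfig (G : DPHypergraph α) (X : α → Finset β) (H : DPHypergraph β) (t n : ℕ) : Prop :=
  1 ≤ t ∧ 1 ≤ n ∧ IsTKn G t n ∧ IsCover G X H ∧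
  ∃ P : α → ℕ → Finset β,
    (∀ v ∈ G.verts, ∀ i ∈ Finset.range (n - 1), ∀ j ∈ Finset.range (n - 1),
      i ≠ j → Disjoint (P v i) (P v j)) ∧
    (∀ v ∈ G.verts, X v = (Finset.range (n - 1)).biUnion (P v)) ∧
    (∀ v ∈ G.verts, ∀ i ∈ Finset.range (n - 1), (P v i).card = t) ∧
    (∀ i ∈ Finset.range (n - 1), ∀ u ∈ G.verts, ∀ v ∈ G.verts, u ≠ v →
      ∀ x ∈ P u i, ∀ y ∈ P v i, ∃ e ∈ H.edges, H.inc e = {x, y}) ∧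
    (∀ e ∈ H.edges, ∃ i ∈ Finset.range (n - 1), ∃ u ∈ G.verts, ∃ v ∈ G.verts,
      u ≠ v ∧ ∃ x ∈ P u i, ∃ y ∈ P v i, H.inc e = {x, y})

def IsOddCConfig (G : DPHypergraph α) (X : α → Finset β) (H : DPHypergraph β) (t n : ℕ) : Prop :=
  1 ≤ t ∧ 5 ≤ n ∧ Odd n ∧ IsTCn G t n ∧ IsCover G X H ∧
  ∃ P : α → ℕ → Finset β,
    (∀ v ∈ G.verts, Disjoint (P v 0) (P v 1)) ∧
    (∀ v ∈ G.verts, X v = P v 0 ∪ P v 1) ∧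
    (∀ v ∈ G.verts, (P v 0).card = t ∧ (P v 1).card = t) ∧
    (∀ i ∈ ({0, 1} : Finset ℕ), ∀ u ∈ G.verts, ∀ v ∈ G.verts, AdjPair G u v →
      ∀ x ∈ P u i, ∀ y ∈ P v i, ∃ e ∈ H.edges, H.inc e = {x, y}) ∧
    (∀ e ∈ H.edges, ∃ i ∈ ({0, 1} : Finset ℕ), ∃ u ∈ G.verts, ∃ v ∈ G.verts,
      AdjPair G u v ∧ ∃ x ∈ P u i, ∃ y ∈ P v i, H.inc e = {x, y})

def IsEvenCConfig (G : DPHypergraph α) (X : α → Finset β) (H : DPHypergraph β) (t n : ℕ) : Prop :=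
  1 ≤ t ∧ 4 ≤ n ∧ Even n ∧ IsTCn G t n ∧ IsCover G X H ∧
  ∃ P : α → ℕ → Finset β, ∃ w w' : α, w ∈ G.verts ∧ w' ∈ G.verts ∧ AdjPair G w w' ∧
    (∀ v ∈ G.verts, Disjoint (P v 0) (P v 1)) ∧
    (∀ v ∈ G.verts, X v = P v 0 ∪ P v 1) ∧
    (∀ v ∈ G.verts, (P v 0).card = t ∧ (P v 1).card = t) ∧
    (∀ i ∈ ({0, 1} : Finset ℕ), ∀ u ∈ G.verts, ∀ v ∈ G.verts, AdjPair G u v →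
      ({u, v} : Finset α) ≠ {w, w'} →
      ∀ x ∈ P u i, ∀ y ∈ P v i, ∃ e ∈ H.edges, H.inc e = {x, y}) ∧
    (∀ x ∈ P w 0, ∀ y ∈ P w' 1, ∃ e ∈ H.edges, H.inc e = {x, y}) ∧
    (∀ x ∈ P w 1, ∀ y ∈ P w' 0, ∃ e ∈ H.edges, H.inc e = {x, y}) ∧
    (∀ e ∈ H.edges, ∃ x y : β, H.inc e = {x, y} ∧
      ((∃ i ∈ ({0, 1} : Finset ℕ), ∃ u ∈ G.verts, ∃ v ∈ G.verts,
        AdjPair G u v ∧ ({u, v} : Finset α) ≠ {w, w'} ∧ x ∈ P u i ∧ y ∈ P v i) ∨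
       (x ∈ P w 0 ∧ y ∈ P w' 1) ∨ (x ∈ P w 1 ∧ y ∈ P w' 0)))

def IsEConfig (G : DPHypergraph α) (X : α → Finset β) (H : DPHypergraph β) : Prop :=
  (∃ e₀ ∈ G.edges, G.edges = {e₀} ∧ G.verts = G.inc e₀) ∧
  IsCover G X H ∧ (∀ v ∈ G.verts, (X v).card = 1) ∧
  ∃ e₁ ∈ H.edges, H.edges = {e₁} ∧ H.inc e₁ = G.verts.biUnion X

def IsMergeOf (G : DPHypergraph α) (X : α → Finset β) (H : DPHypergraph β)
    (G₁ : DPHypergraph α) (X₁ : α → Finset β) (H₁ : DPHypergraph β)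
    (G₂ : DPHypergraph α) (X₂ : α → Finset β) (H₂ : DPHypergraph β)
    (v₁ v₂ vs : α) : Prop :=
  Disjoint G₁.verts G₂.verts ∧ Disjoint G₁.edges G₂.edges ∧
  Disjoint H₁.verts H₂.verts ∧ Disjoint H₁.edges H₂.edges ∧
  v₁ ∈ G₁.verts ∧ v₂ ∈ G₂.verts ∧ vs ∉ G₁.verts ∪ G₂.verts ∧
  G.verts = insert vs (((G₁.verts ∪ G₂.verts).erase v₁).erase v₂) ∧
  G.edges = G₁.edges ∪ G₂.edges ∧
  (∀ e ∈ G₁.edges, G.inc e =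
    if v₁ ∈ G₁.inc e then insert vs ((G₁.inc e).erase v₁) else G₁.inc e) ∧
  (∀ e ∈ G₂.edges, G.inc e =
    if v₂ ∈ G₂.inc e then insert vs ((G₂.inc e).erase v₂) else G₂.inc e) ∧
  H.verts = H₁.verts ∪ H₂.verts ∧ H.edges = H₁.edges ∪ H₂.edges ∧
  (∀ e ∈ H₁.edges, H.inc e = H₁.inc e) ∧ (∀ e ∈ H₂.edges, H.inc e = H₂.inc e) ∧
  X vs = X₁ v₁ ∪ X₂ v₂ ∧
  (∀ u ∈ G₁.verts.erase v₁, X u = X₁ u) ∧ (∀ u ∈ G₂.verts.erase v₂, X u = X₂ u)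

inductive Constructible : DPHypergraph α → (α → Finset β) → DPHypergraph β → Prop where
  | K : ∀ {G : DPHypergraph α} {X : α → Finset β} {H : DPHypergraph β} {t n : ℕ},
      IsKConfig G X H t n → Constructible G X H
  | Codd : ∀ {G : DPHypergraph α} {X : α → Finset β} {H : DPHypergraph β} {t n : ℕ},
      IsOddCConfig G X H t n → Constructible G X H
  | Ceven : ∀ {G : DPHypergraph α} {X : α → Finset β} {H : DPHypergraph β} {t n : ℕ},
      IsEvenCConfig G X H t n → Constructible G X H
  | E : ∀ {G : DPHypergraph α} {X : α → Finset β} {H : DPHypergraph β},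
      IsEConfig G X H → Constructible G X H
  | merge : ∀ {G G₁ G₂ : DPHypergraph α} {X X₁ X₂ : α → Finset β} {H H₁ H₂ : DPHypergraph β}
      {v₁ v₂ vs : α},
      Constructible G₁ X₁ H₁ → Constructible G₂ X₂ H₂ →
      IsMergeOf G X H G₁ X₁ H₁ G₂ X₂ H₂ v₁ v₂ vs → Constructible G X H

def reducedVerts (G : DPHypergraph α) (X : α → Finset β) (H : DPHypergraph β)
    (v : α) (x : β) : Finset β :=
  (G.shrink v).verts.biUnion (fun u => X u \ H.nbhd x)

def reduceH (G : DPHypergraph α) (X : α → Finset β) (H : DPHypergraph β)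
    (v : α) (x : β) : DPHypergraph β where
  verts := reducedVerts G X H v x
  edges := H.edges.filter (fun e =>
    2 ≤ ((H.inc e).erase x).card ∧ (H.inc e).erase x ⊆ reducedVerts G X H v x)
  inc := fun e => (H.inc e).erase x
  inc_sub := fun e he => (Finset.mem_filter.mp he).2.2
  inc_card := fun e he => (Finset.mem_filter.mp he).2.1

/-!
Write the cycle as `f 0, …, f (n - 1)` and call `P v 0`, `P v 1` the two layers of `X v`.
An independent transversal picks one vertex in every `X (f k)`; since equal layers of
consecutive vertices are completely joined, the layers of the picked vertices alternate around
the cycle, which is impossible for odd `n`. After deleting an edge `xy` of `H` between equal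
layers of `f a` and `f (a + 1)`, pick `x`, `y` and alternate the layers along the rest of the
cycle. This transversal is independent because `H` has no parallel edges, which is a count:
as a cover, `H` has at most `|E(G)| · 2t = 2nt²` edges, while it contains the `2nt²` distinct
pairs of equal layers of consecutive vertices.
-/

namespace Nat

lemma succ_mod_cases {n k : ℕ} (hk : k < n) :
    (k + 1) % n = k + 1 ∧ k + 1 < n ∨ (k + 1) % n = 0 ∧ k + 1 = n := by
  rcases Nat.lt_or_ge (k + 1) n with h | h
  · exact Or.inl ⟨Nat.mod_eq_of_lt h, h⟩
  · have hn : k + 1 = n := by omega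
    exact Or.inr ⟨by rw [hn, Nat.mod_self], hn⟩

lemma succ_mod_ne_self {n k : ℕ} (hn : 2 ≤ n) (hk : k < n) : (k + 1) % n ≠ k := by
  rcases succ_mod_cases hk with h | h <;> omega

lemma succ_mod_succ_mod_ne_self {n k : ℕ} (hn : 3 ≤ n) (hk : k < n) :
    ((k + 1) % n + 1) % n ≠ k := by
  rcases succ_mod_cases hk with h | h <;>
    rcases succ_mod_cases (Nat.mod_lt (k + 1) (by omega : 0 < n)) with h' | h' <;> omega

lemma succ_mod_inj {n j k : ℕ} (hj : j < n) (hk : k < n) (h : (j + 1) % n = (k + 1) % n) :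
    j = k := by
  rcases succ_mod_cases hj with h₁ | h₁ <;> rcases succ_mod_cases hk with h₂ | h₂ <;> omega

lemma exists_succ_mod_eq {n k : ℕ} (hk : k < n) : ∃ j < n, (j + 1) % n = k := by
  rcases k with _ | k
  · exact ⟨n - 1, by omega, by rw [Nat.sub_add_cancel (by omega), Nat.mod_self]⟩
  · exact ⟨k, by omega, Nat.mod_eq_of_lt hk⟩

/-- Every `2`-colouring of an odd cycle has a monochromatic edge. -/
lemma exists_succ_mod_eq_of_odd {n : ℕ} (hn : Odd n) {c : ℕ → ℕ} (hc : ∀ k < n, c k < 2) :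
    ∃ k < n, c ((k + 1) % n) = c k := by
  by_contra! h
  have hcolour : ∀ k < n, c k = (c 0 + k) % 2 := by
    intro k
    induction k with
    | zero => intro h0; have := hc 0 h0; omega
    | succ k ih =>
      intro hk
      have hstep := h k (by omega)
      rw [Nat.mod_eq_of_lt hk] at hstep
      have := hc (k + 1) hk
      have := ih (by omega)
      omega
  obtain ⟨m, rfl⟩ := hn
  have := hc 0 (by omega)
  have hlast := h (2 * m) (by omega)
  rw [Nat.mod_self] at hlast
  have := hcolour (2 * m) (by omega)
  omega

/-- An odd cycle has a `2`-colouring whose only monochromatic edge is a prescribed one. -/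
lemma exists_alternating_except_of_odd {n a i : ℕ} (hn : Odd n) (ha : a < n) (hi : i < 2) :
    ∃ c : ℕ → ℕ, (∀ k, c k < 2) ∧ c a = i ∧ c ((a + 1) % n) = i ∧
      ∀ k < n, c ((k + 1) % n) = c k → k = a := by
  obtain ⟨m, rfl⟩ := hn
  -- away from `a`, shift `i` by the parity of the distance from `a + 1` to `k` along the cycle
  refine ⟨fun k => if k = a then i else if a < k then (i + 1 + k - a) % 2
    else (i + k + 2 * m + 2 - a) % 2, fun k => ?_, if_pos rfl, ?_, fun k hk => ?_⟩
  · dsimp only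
    split_ifs <;> omega
  · rcases succ_mod_cases ha with ⟨h, _⟩ | ⟨h, _⟩ <;> rw [h] <;> dsimp only <;>
      split_ifs <;> omega
  · intro hck
    rcases succ_mod_cases hk with ⟨h, _⟩ | ⟨h, _⟩ <;> rw [h] at hck <;>
      dsimp only at hck <;> split_ifs at hck <;> omega

end Nat

namespace DPHypergraph

variable {G : DPHypergraph α}

instance : Std.Symm G.Adj := ⟨fun _ _ ⟨hne, e, he, hu, hv⟩ => ⟨hne.symm, e, he, hv, hu⟩⟩

lemma mult_pos_iff {u v : α} : 0 < G.mult u v ↔ ∃ e ∈ G.edges, G.inc e = {u, v} := by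
  rw [mult, card_pos, filter_nonempty_iff]

lemma adjPair_iff {u v : α} : AdjPair G u v ↔ u ≠ v ∧ 0 < G.mult u v := by
  rw [AdjPair, mult_pos_iff]

lemma adj_of_adjPair {u v : α} (h : AdjPair G u v) : G.Adj u v :=
  let ⟨hne, e, he, hinc⟩ := h
  ⟨hne, e, he, by simp [hinc], by simp [hinc]⟩

lemma exists_inc_eq_pair {e : ℕ} {v : α} (he : (G.inc e).card = 2) (hv : v ∈ G.inc e) :
    ∃ w, w ≠ v ∧ G.inc e = {v, w} := by
  obtain ⟨x, y, hxy, h⟩ := card_eq_two.1 he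
  rw [h, mem_insert, mem_singleton] at hv
  rcases hv with rfl | rfl
  exacts [⟨y, hxy.symm, h⟩, ⟨x, hxy, h.trans (pair_comm _ _)⟩]

lemma sum_degree_eq_sum_card_inc :
    ∑ v ∈ G.verts, G.degree v = ∑ e ∈ G.edges, (G.inc e).card :=
  (sum_card_bipartiteAbove_eq_sum_card_bipartiteBelow (fun v e => v ∈ G.inc e)).trans
    (sum_congr rfl fun e he => by
      rw [bipartiteBelow, filter_mem_eq_inter, inter_eq_right.2 (G.inc_sub e he)])

lemma two_mul_card_edges_le (h2 : ∀ e ∈ G.edges, (G.inc e).card = 2) {d : ℕ}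
    (hd : ∀ v ∈ G.verts, G.degree v ≤ d) : 2 * G.edges.card ≤ G.verts.card * d :=
  calc 2 * G.edges.card = ∑ e ∈ G.edges, (G.inc e).card := by
        rw [sum_congr rfl h2, sum_const, smul_eq_mul, mul_comm]
    _ = ∑ v ∈ G.verts, G.degree v := sum_degree_eq_sum_card_inc.symm
    _ ≤ ∑ _v ∈ G.verts, d := sum_le_sum hd
    _ = G.verts.card * d := by rw [sum_const, smul_eq_mul]

end DPHypergraph

section Cover

variable {G : DPHypergraph α} {X : α → Finset β} {H : DPHypergraph β}

omit [DecidableEq α] in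
lemma IsCover.pairwiseDisjoint (hcov : IsCover G X H) : (G.verts : Set α).PairwiseDisjoint X :=
  fun u hu v hv huv => hcov.1 u hu v hv huv

omit [DecidableEq α] in
lemma IsCover.card_edges_le (hcov : IsCover G X H) {d : ℕ}
    (hX : ∀ v ∈ G.verts, (X v).card ≤ d) : H.edges.card ≤ G.edges.card * d := by
  obtain ⟨-, -, -, M, hM, hHM⟩ := hcov
  have hMd : ∀ g ∈ G.edges, (M g).card ≤ d := by
    intro g hg
    obtain ⟨-, hMinc, hMdisj⟩ := hM g hg
    obtain ⟨u, hu⟩ := card_pos.1 (by have := G.inc_card g hg; omega : 0 < (G.inc g).card)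
    calc (M g).card = ∑ e ∈ M g, (H.inc e ∩ X u).card := by
          rw [sum_congr rfl fun e he => (hMinc e he).1 u hu, sum_const, smul_eq_mul, mul_one]
      _ = ((M g).biUnion fun e => H.inc e ∩ X u).card :=
          (card_biUnion fun e₁ h₁ e₂ h₂ hne =>
            (hMdisj e₁ h₁ e₂ h₂ hne).mono inter_subset_left inter_subset_left).symm
      _ ≤ (X u).card := card_le_card (biUnion_subset.2 fun _ _ => inter_subset_right)
      _ ≤ d := hX u (G.inc_sub g hg hu)
  calc H.edges.card ≤ ∑ g ∈ G.edges, (M g).card := hHM ▸ card_biUnion_le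
    _ ≤ ∑ _g ∈ G.edges, d := sum_le_sum hMd
    _ = G.edges.card * d := by rw [sum_const, smul_eq_mul]

end Cover

/-- `IsTCn G t n` with its enumeration `f` of the cycle made explicit. -/
structure IsTCnEnum (G : DPHypergraph α) (t n : ℕ) (f : ℕ → α) : Prop where
  three_le : 3 ≤ n
  card_verts : G.verts.card = n
  card_inc : ∀ e ∈ G.edges, (G.inc e).card = 2
  verts_eq : G.verts = (range n).image f
  apply_ne : ∀ i < n, ∀ j < n, i ≠ j → f i ≠ f j
  mult_eq : ∀ i < n, ∀ j < n, i ≠ j →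
    G.mult (f i) (f j) = if j = (i + 1) % n ∨ i = (j + 1) % n then t else 0

lemma IsTCn.exists_isTCnEnum {G : DPHypergraph α} {t n : ℕ} (h : IsTCn G t n) :
    ∃ f, IsTCnEnum G t n f :=
  let ⟨h3, hcard, h2, f, hv, hne, hm⟩ := h
  ⟨f, h3, hcard, h2, hv, hne, hm⟩

namespace IsTCnEnum

variable {G : DPHypergraph α} {X : α → Finset β} {t n : ℕ} {f : ℕ → α}

lemma mem_verts (hf : IsTCnEnum G t n f) {k : ℕ} (hk : k < n) : f k ∈ G.verts :=
  hf.verts_eq ▸ mem_image_of_mem f (mem_range.2 hk)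

lemma exists_eq (hf : IsTCnEnum G t n f) {v : α} (hv : v ∈ G.verts) : ∃ k < n, f k = v := by
  simpa [hf.verts_eq] using hv

omit [DecidableEq β] in
lemma eq_of_mem_X (hf : IsTCnEnum G t n f) (hX : (G.verts : Set α).PairwiseDisjoint X)
    {j k : ℕ} {x : β} (hj : j < n) (hk : k < n) (hxj : x ∈ X (f j)) (hxk : x ∈ X (f k)) :
    j = k := by
  by_contra hjk
  exact disjoint_left.1 (hX (hf.mem_verts hj) (hf.mem_verts hk) (hf.apply_ne j hj k hk hjk))
    hxj hxk

lemma mult_succ (hf : IsTCnEnum G t n f) {k : ℕ} (hk : k < n) :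
    G.mult (f k) (f ((k + 1) % n)) = t := by
  rw [hf.mult_eq k hk _ (Nat.mod_lt _ (by omega))
    (Nat.succ_mod_ne_self (by have := hf.three_le; omega) hk).symm, if_pos (Or.inl rfl)]

lemma adjPair_succ (hf : IsTCnEnum G t n f) (ht : 1 ≤ t) {k : ℕ} (hk : k < n) :
    AdjPair G (f k) (f ((k + 1) % n)) :=
  adjPair_iff.2 ⟨hf.apply_ne k hk _ (Nat.mod_lt _ (by omega))
    (Nat.succ_mod_ne_self (by have := hf.three_le; omega) hk).symm, hf.mult_succ hk ▸ ht⟩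

lemma succ_of_adjPair (hf : IsTCnEnum G t n f) {j k : ℕ} (hj : j < n) (hk : k < n)
    (h : AdjPair G (f j) (f k)) : k = (j + 1) % n ∨ j = (k + 1) % n := by
  rw [adjPair_iff] at h
  have hjk : j ≠ k := by rintro rfl; exact h.1 rfl
  rw [hf.mult_eq j hj k hk hjk] at h
  by_contra hc
  rw [if_neg hc] at h
  exact h.2.false

lemma connected (hf : IsTCnEnum G t n f) (ht : 1 ≤ t) : G.Connected := by
  have hreach : ∀ k < n, Relation.ReflTransGen G.Adj (f 0) (f k) := by
    intro k
    induction k with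
    | zero => exact fun _ => .refl
    | succ k ih =>
      intro hk
      have hadj := adj_of_adjPair (hf.adjPair_succ ht (k := k) (by omega))
      rw [Nat.mod_eq_of_lt hk] at hadj
      exact (ih (by omega)).tail hadj
  intro u hu v hv
  obtain ⟨j, hj, rfl⟩ := hf.exists_eq hu
  obtain ⟨k, hk, rfl⟩ := hf.exists_eq hv
  exact (Std.Symm.symm _ _ (hreach j hj)).trans (hreach k hk)

lemma degree_le (hf : IsTCnEnum G t n f) {v : α} (hv : v ∈ G.verts) : G.degree v ≤ 2 * t := by
  obtain ⟨k, hk, rfl⟩ := hf.exists_eq hv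
  obtain ⟨p, hp, hpk⟩ := Nat.exists_succ_mod_eq hk
  have hsub : G.edges.filter (fun e => f k ∈ G.inc e) ⊆
      G.edges.filter (fun e => G.inc e = {f p, f k}) ∪
        G.edges.filter (fun e => G.inc e = {f k, f ((k + 1) % n)}) := by
    intro e he
    obtain ⟨he, hke⟩ := mem_filter.1 he
    obtain ⟨w, hwk, hinc⟩ := exists_inc_eq_pair (hf.card_inc e he) hke
    obtain ⟨j, hj, rfl⟩ := hf.exists_eq (G.inc_sub e he (by simp [hinc] : w ∈ G.inc e))
    rcases hf.succ_of_adjPair hk hj ⟨hwk.symm, e, he, hinc⟩ with rfl | hkj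
    · exact mem_union_right _ (mem_filter.2 ⟨he, hinc⟩)
    · obtain rfl := Nat.succ_mod_inj hj hp (hkj.symm.trans hpk.symm)
      exact mem_union_left _ (mem_filter.2 ⟨he, hinc.trans (pair_comm _ _)⟩)
  have hmult_p : G.mult (f p) (f k) = t := hpk ▸ hf.mult_succ hp
  calc G.degree (f k) ≤ G.mult (f p) (f k) + G.mult (f k) (f ((k + 1) % n)) :=
        (card_le_card hsub).trans (card_union_le _ _)
    _ = 2 * t := by rw [hmult_p, hf.mult_succ hk]; ring

lemma card_edges_le (hf : IsTCnEnum G t n f) : G.edges.card ≤ n * t := by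
  have := two_mul_card_edges_le hf.card_inc fun v hv => hf.degree_le hv
  rw [hf.card_verts] at this
  linarith

lemma card_image_inter_eq_one (hf : IsTCnEnum G t n f)
    (hX : (G.verts : Set α).PairwiseDisjoint X) {z : ℕ → β} (hz : ∀ k < n, z k ∈ X (f k))
    {v : α} (hv : v ∈ G.verts) : ((range n).image z ∩ X v).card = 1 := by
  obtain ⟨k, hk, rfl⟩ := hf.exists_eq hv
  refine card_eq_one.2 ⟨z k, eq_singleton_iff_unique_mem.2
    ⟨mem_inter.2 ⟨mem_image_of_mem _ (mem_range.2 hk), hz k hk⟩, fun w hw => ?_⟩⟩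
  obtain ⟨hwz, hwk⟩ := mem_inter.1 hw
  obtain ⟨j, hj, rfl⟩ := mem_image.1 hwz
  rw [hf.eq_of_mem_X hX (mem_range.1 hj) hk (hz j (mem_range.1 hj)) hwk]

end IsTCnEnum

/-- `P v 0` and `P v 1` are the paper's `X_v^1` and `X_v^2`. -/
structure IsLayerSplit (G : DPHypergraph α) (X : α → Finset β) (H : DPHypergraph β) (t : ℕ)
    (P : α → ℕ → Finset β) : Prop where
  disjoint : ∀ v ∈ G.verts, Disjoint (P v 0) (P v 1)
  eq_union : ∀ v ∈ G.verts, X v = P v 0 ∪ P v 1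
  card_eq : ∀ v ∈ G.verts, ∀ i < 2, (P v i).card = t
  exists_edge : ∀ i < 2, ∀ u ∈ G.verts, ∀ v ∈ G.verts, AdjPair G u v →
    ∀ x ∈ P u i, ∀ y ∈ P v i, ∃ e ∈ H.edges, H.inc e = {x, y}
  exists_layer : ∀ e ∈ H.edges, ∃ i < 2, ∃ u ∈ G.verts, ∃ v ∈ G.verts,
    AdjPair G u v ∧ ∃ x ∈ P u i, ∃ y ∈ P v i, H.inc e = {x, y}

lemma IsOddCConfig.exists_isLayerSplit {G : DPHypergraph α} {X : α → Finset β}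
    {H : DPHypergraph β} {t n : ℕ} (hC : IsOddCConfig G X H t n) :
    ∃ P, IsLayerSplit G X H t P := by
  obtain ⟨-, -, -, -, -, P, hdisj, hunion, hcard, hedge, hlayer⟩ := hC
  refine ⟨P, hdisj, hunion, fun v hv i hi => ?_, fun i hi => hedge i (by simp; omega),
    fun e he => ?_⟩
  · interval_cases i
    exacts [(hcard v hv).1, (hcard v hv).2]
  · obtain ⟨i, hi, hrest⟩ := hlayer e he
    exact ⟨i, by simp at hi; omega, hrest⟩

def layerPairs (f : ℕ → α) (P : α → ℕ → Finset β) (n : ℕ) : Finset (β × β) :=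
  (range n ×ˢ range 2).biUnion fun ki => P (f ki.1) ki.2 ×ˢ P (f ((ki.1 + 1) % n)) ki.2

omit [DecidableEq α] in
lemma mem_layerPairs {f : ℕ → α} {P : α → ℕ → Finset β} {n : ℕ} {p : β × β} :
    p ∈ layerPairs f P n ↔
      ∃ k < n, ∃ i < 2, p.1 ∈ P (f k) i ∧ p.2 ∈ P (f ((k + 1) % n)) i := by
  simp [layerPairs]

namespace IsLayerSplit

variable {G : DPHypergraph α} {X : α → Finset β} {H : DPHypergraph β} {t n : ℕ}
  {f : ℕ → α} {P : α → ℕ → Finset β}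

lemma subset (hP : IsLayerSplit G X H t P) {v : α} (hv : v ∈ G.verts) {i : ℕ} (hi : i < 2) :
    P v i ⊆ X v := by
  rw [hP.eq_union v hv]
  interval_cases i
  exacts [subset_union_left, subset_union_right]

lemma exists_mem (hP : IsLayerSplit G X H t P) {v : α} (hv : v ∈ G.verts) {x : β}
    (hx : x ∈ X v) : ∃ i < 2, x ∈ P v i := by
  rw [hP.eq_union v hv, mem_union] at hx
  rcases hx with h | h
  exacts [⟨0, by omega, h⟩, ⟨1, by omega, h⟩]

lemma eq_of_mem (hP : IsLayerSplit G X H t P) {v : α} (hv : v ∈ G.verts) {i j : ℕ}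
    (hi : i < 2) (hj : j < 2) {x : β} (hxi : x ∈ P v i) (hxj : x ∈ P v j) : i = j := by
  have hdisj := hP.disjoint v hv
  interval_cases i <;> interval_cases j
  · rfl
  · exact absurd hxj (disjoint_left.1 hdisj hxi)
  · exact absurd hxi (disjoint_left.1 hdisj hxj)
  · rfl

lemma card_X (hP : IsLayerSplit G X H t P) {v : α} (hv : v ∈ G.verts) : (X v).card = 2 * t := by
  rw [hP.eq_union v hv, card_union_of_disjoint (hP.disjoint v hv),
    hP.card_eq v hv 0 (by omega), hP.card_eq v hv 1 (by omega), two_mul]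

lemma nonempty (hP : IsLayerSplit G X H t P) (ht : 1 ≤ t) {v : α} (hv : v ∈ G.verts) {i : ℕ}
    (hi : i < 2) : (P v i).Nonempty :=
  card_pos.1 (by rw [hP.card_eq v hv i hi]; omega)

lemma eq_of_mem_layer (hP : IsLayerSplit G X H t P) (hf : IsTCnEnum G t n f)
    (hX : (G.verts : Set α).PairwiseDisjoint X) {j k i i' : ℕ} (hj : j < n) (hk : k < n)
    (hi : i < 2) (hi' : i' < 2) {x : β} (hx : x ∈ P (f j) i) (hx' : x ∈ P (f k) i') :
    j = k ∧ i = i' := by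
  obtain rfl := hf.eq_of_mem_X hX hj hk (hP.subset (hf.mem_verts hj) hi hx)
    (hP.subset (hf.mem_verts hk) hi' hx')
  exact ⟨rfl, hP.eq_of_mem (hf.mem_verts hj) hi hi' hx hx'⟩

lemma exists_succ_layer (hP : IsLayerSplit G X H t P) (hf : IsTCnEnum G t n f) {e : ℕ}
    (he : e ∈ H.edges) : ∃ k < n, ∃ i < 2, ∃ x ∈ P (f k) i,
      ∃ y ∈ P (f ((k + 1) % n)) i, H.inc e = {x, y} := by
  obtain ⟨i, hi, u, hu, v, hv, huv, x, hx, y, hy, hinc⟩ := hP.exists_layer e he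
  obtain ⟨j, hj, rfl⟩ := hf.exists_eq hu
  obtain ⟨k, hk, rfl⟩ := hf.exists_eq hv
  rcases hf.succ_of_adjPair hj hk huv with rfl | rfl
  exacts [⟨j, hj, i, hi, x, hx, y, hy, hinc⟩,
    ⟨k, hk, i, hi, y, hy, x, hx, hinc.trans (pair_comm _ _)⟩]

lemma exists_succ_of_inc_subset (hP : IsLayerSplit G X H t P) (hf : IsTCnEnum G t n f)
    (hX : (G.verts : Set α).PairwiseDisjoint X) {z : ℕ → β} (hz : ∀ k < n, z k ∈ X (f k))
    {e : ℕ} (he : e ∈ H.edges) (hsub : H.inc e ⊆ (range n).image z) :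
    ∃ k < n, H.inc e = {z k, z ((k + 1) % n)} ∧
      ∃ i < 2, z k ∈ P (f k) i ∧ z ((k + 1) % n) ∈ P (f ((k + 1) % n)) i := by
  obtain ⟨k, hk, i, hi, x, hx, y, hy, hinc⟩ := hP.exists_succ_layer hf he
  have hz_eq : ∀ {j : ℕ} {w : β}, j < n → w ∈ P (f j) i → w ∈ H.inc e → z j = w := by
    intro j w hj hw hwe
    obtain ⟨j', hj', rfl⟩ := mem_image.1 (hsub hwe)
    rw [hf.eq_of_mem_X hX (mem_range.1 hj') hj (hz _ (mem_range.1 hj'))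
      (hP.subset (hf.mem_verts hj) hi hw)]
  obtain rfl := hz_eq hk hx (by simp [hinc])
  obtain rfl := hz_eq (Nat.mod_lt _ (by omega)) hy (by simp [hinc])
  exact ⟨k, hk, hinc, i, hi, hx, hy⟩

theorem not_hasIT (hP : IsLayerSplit G X H t P) (hf : IsTCnEnum G t n f) (ht : 1 ≤ t)
    (hodd : Odd n) : ¬ HasIT H G.verts X := by
  rintro ⟨T, hT, hTX⟩
  have hmeet : ∀ k < n, ∃ i < 2, (T ∩ P (f k) i).Nonempty := by
    intro k hk
    obtain ⟨x, hx⟩ := card_pos.1 (by rw [hTX _ (hf.mem_verts hk)]; omega :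
      0 < (T ∩ X (f k)).card)
    obtain ⟨hxT, hxX⟩ := mem_inter.1 hx
    obtain ⟨i, hi, hxi⟩ := hP.exists_mem (hf.mem_verts hk) hxX
    exact ⟨i, hi, x, mem_inter.2 ⟨hxT, hxi⟩⟩
  choose! c hc hcT using hmeet
  obtain ⟨k, hk, hck⟩ := Nat.exists_succ_mod_eq_of_odd hodd hc
  have hk' := Nat.mod_lt (k + 1) (by omega : 0 < n)
  obtain ⟨x, hx⟩ := hcT k hk
  obtain ⟨y, hy⟩ := hcT _ hk'
  rw [mem_inter] at hx hy
  rw [hck] at hy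
  obtain ⟨e, he, hinc⟩ := hP.exists_edge _ (hc k hk) _ (hf.mem_verts hk) _ (hf.mem_verts hk')
    (hf.adjPair_succ ht hk) x hx.2 y hy.2
  exact hT e he (hinc ▸ insert_subset hx.1 (singleton_subset_iff.2 hy.1))

theorem hasIT_eraseEdge (hP : IsLayerSplit G X H t P) (hf : IsTCnEnum G t n f)
    (hX : (G.verts : Set α).PairwiseDisjoint X) (ht : 1 ≤ t) (hodd : Odd n)
    (hinj : Set.InjOn H.inc H.edges) {e₀ : ℕ} (he₀ : e₀ ∈ H.edges) :
    HasIT (H.eraseEdge e₀) G.verts X := by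
  obtain ⟨a, ha, i, hi, x, hx, y, hy, hinc₀⟩ := hP.exists_succ_layer hf he₀
  obtain ⟨c, hc, hca, hca', hc_eq⟩ := Nat.exists_alternating_except_of_odd hodd ha hi
  have hn := hf.three_le
  have : Nonempty β := ⟨x⟩
  have hpick :
      ∀ k < n, ∃ w ∈ P (f k) (c k), (k = a → w = x) ∧ (k = (a + 1) % n → w = y) := by
    intro k hk
    by_cases hka : k = a
    · subst hka
      exact ⟨x, hca ▸ hx, fun _ => rfl,
        fun h => absurd h.symm (Nat.succ_mod_ne_self (by omega) hk)⟩
    by_cases hka' : k = (a + 1) % n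
    · subst hka'
      exact ⟨y, hca' ▸ hy, fun h => absurd h hka, fun _ => rfl⟩
    obtain ⟨w, hw⟩ := hP.nonempty ht (hf.mem_verts hk) (hc k)
    exact ⟨w, hw, fun h => absurd h hka, fun h => absurd h hka'⟩
  choose! z hz hza hza' using hpick
  have hzX : ∀ k < n, z k ∈ X (f k) := fun k hk => hP.subset (hf.mem_verts hk) (hc k) (hz k hk)
  refine ⟨(range n).image z, fun e he hsub => ?_,
    fun v hv => hf.card_image_inter_eq_one hX hzX hv⟩
  obtain ⟨hne, he⟩ := mem_erase.1 he
  obtain ⟨k, hk, hinc, j, hj, hjk, hjk'⟩ := hP.exists_succ_of_inc_subset hf hX hzX he hsub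
  have hk' := Nat.mod_lt (k + 1) (by omega : 0 < n)
  have hka : k = a := hc_eq k hk
    (by rw [← hP.eq_of_mem (hf.mem_verts hk') hj (hc _) hjk' (hz _ hk'),
      hP.eq_of_mem (hf.mem_verts hk) hj (hc _) hjk (hz k hk)])
  exact hne (hinj he he₀ (by rw [hinc, hinc₀, hza k hk hka, hza' _ hk' (by rw [hka])]))

lemma card_layerPairs (hP : IsLayerSplit G X H t P) (hf : IsTCnEnum G t n f)
    (hX : (G.verts : Set α).PairwiseDisjoint X) : (layerPairs f P n).card = n * 2 * (t * t) := by
  rw [layerPairs, card_biUnion, sum_congr rfl fun ki hki => ?_, sum_const, card_product,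
    card_range, card_range, smul_eq_mul]
  · rw [mem_product, mem_range, mem_range] at hki
    rw [card_product, hP.card_eq _ (hf.mem_verts hki.1) _ hki.2,
      hP.card_eq _ (hf.mem_verts (Nat.mod_lt _ (by omega))) _ hki.2]
  · rintro ⟨k, i⟩ hki ⟨k', i'⟩ hki' hne
    simp only [coe_product, coe_range, Set.mem_prod, Set.mem_Iio] at hki hki'
    refine disjoint_product.2 (Or.inl (disjoint_left.2 fun x hx hx' => hne ?_))
    obtain ⟨rfl, rfl⟩ := hP.eq_of_mem_layer hf hX hki.1 hki'.1 hki.2 hki'.2 hx hx'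
    rfl

lemma injOn_layerPairs (hP : IsLayerSplit G X H t P) (hf : IsTCnEnum G t n f)
    (hX : (G.verts : Set α).PairwiseDisjoint X) :
    Set.InjOn (fun p : β × β => ({p.1, p.2} : Finset β)) (layerPairs f P n) := by
  rintro ⟨x, y⟩ hxy ⟨x', y'⟩ hxy' h
  obtain ⟨k, hk, i, hi, hx, hy⟩ := mem_layerPairs.1 hxy
  obtain ⟨k', hk', i', hi', hx', hy'⟩ := mem_layerPairs.1 hxy'
  have h' : x = x' ∧ y = y' ∨ x = y' ∧ y = x' := by
    simpa [← coe_inj, Set.pair_eq_pair_iff] using h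
  rcases h' with ⟨rfl, rfl⟩ | ⟨rfl, rfl⟩
  · rfl
  · have hmod : ∀ j, (j + 1) % n < n := fun j => Nat.mod_lt _ (by omega)
    obtain ⟨h₁, -⟩ := hP.eq_of_mem_layer hf hX hk (hmod k') hi hi' hx hy'
    obtain ⟨h₂, -⟩ := hP.eq_of_mem_layer hf hX (hmod k) hk' hi hi' hy hx'
    exact absurd (by rw [h₂, h₁]) (Nat.succ_mod_succ_mod_ne_self hf.three_le hk)

theorem injOn_inc (hP : IsLayerSplit G X H t P) (hf : IsTCnEnum G t n f) (hcov : IsCover G X H)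
    (ht : 1 ≤ t) : Set.InjOn H.inc H.edges := by
  have hsub : (layerPairs f P n).image (fun p : β × β => ({p.1, p.2} : Finset β)) ⊆
      H.edges.image H.inc := by
    intro s hs
    obtain ⟨⟨x, y⟩, hxy, rfl⟩ := mem_image.1 hs
    obtain ⟨k, hk, i, hi, hx, hy⟩ := mem_layerPairs.1 hxy
    obtain ⟨e, he, hinc⟩ := hP.exists_edge i hi _ (hf.mem_verts hk) _
      (hf.mem_verts (Nat.mod_lt _ (by omega))) (hf.adjPair_succ ht hk) x hx y hy
    exact mem_image.2 ⟨e, he, hinc⟩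
  refine card_image_iff.1 (le_antisymm card_image_le ?_)
  calc H.edges.card ≤ G.edges.card * (2 * t) := hcov.card_edges_le fun v hv => (hP.card_X hv).le
    _ ≤ n * t * (2 * t) := Nat.mul_le_mul_right _ hf.card_edges_le
    _ = (layerPairs f P n).card := by rw [hP.card_layerPairs hf hcov.pairwiseDisjoint]; ring
    _ = ((layerPairs f P n).image _).card :=
        (card_image_of_injOn (hP.injOn_layerPairs hf hcov.pairwiseDisjoint)).symm
    _ ≤ (H.edges.image H.inc).card := card_le_card hsub

end IsLayerSplit

/-- every odd C-configuration is a minimal uncolorable degree-feasible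
configuration. -/
theorem oddCConfig_minUncol (G : DPHypergraph α) (X : α → Finset β) (H : DPHypergraph β)
    (t n : ℕ) (hC : IsOddCConfig G X H t n) :
    G.Connected ∧ (∀ v ∈ G.verts, G.degree v ≤ (X v).card) ∧
    MinUncol H G.verts X := by
  obtain ⟨P, hP⟩ := hC.exists_isLayerSplit
  obtain ⟨ht, -, hodd, hTCn, hcov, -⟩ := hC
  obtain ⟨f, hf⟩ := hTCn.exists_isTCnEnum
  refine ⟨hf.connected ht, fun v hv => (hf.degree_le hv).trans (hP.card_X hv).ge,
    hP.not_hasIT hf ht hodd, fun e he => ?_⟩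
  exact hP.hasIT_eraseEdge hf hcov.pairwiseDisjoint ht hodd (hP.injOn_inc hf hcov ht) he
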